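/- arXiv:1903.01211 — 2 statements merged into one kernel-verified Lean document; each statement's English description precedes it below -/
import Mathlib

section
/- If a type D is algebraically flabby, then D is algebraically injective: for every embedding j : X → Y and every f : X → D, one can construct g : Y → D with g (j x) = f x for all x. The extension is defined by applying flabbiness to the map fiber j y → D sending (x, p) to f x. -/
universe u v t

def IsEmb {X : Type u} {Y : Type v} (j : X → Y) : Prop :=
  ∀ y : Y, Subsingleton {x : X // j x = y}

/-- Algebraic `u,v`-injectivity: a designated extension along every embedding. -/
def AlgInj (D : Type t) : Type (max (u + 1) (v + 1) t) :=
  ∀ (X : Type u) (Y : Type v) (j : X → Y), IsEmb j →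
    ∀ f : X → D, Σ' g : Y → D, ∀ x : X, g (j x) = f x

/-- Algebraic flabbiness: a designated element agreeing with any
map from a subsingleton. -/
def AlgFlabby (D : Type t) : Type (max (u + 1) t) :=
  ∀ P : Type u, Subsingleton P → ∀ f : P → D, Σ' d : D, ∀ p : P, d = f p

theorem stmt_10 {D : Type t} (flab : AlgFlabby.{max u v} D) :
    Nonempty (AlgInj.{u, v} D) := by
  refine ⟨fun X Y j hj f => ?_⟩
  have hsub : ∀ y : Y, Subsingleton (ULift.{v} {x : X // j x = y}) := by
    intro y
    have := hj y
    exact ⟨fun a b => by cases a; cases b; exact congrArg ULift.up (Subsingleton.elim _ _)⟩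
  refine ⟨fun y => (flab (ULift.{v} {x : X // j x = y}) (hsub y)
    (fun p => f p.down.1)).1, fun x => ?_⟩
  exact (flab _ (hsub (j x)) _).2 ⟨⟨x, rfl⟩⟩
end

section
/- Any subcollection of types closed under subsingletons and under sigma types is algebraically flabby: if A : Type u → Prop satisfies (i) A P for every subsingleton P : Type u, and (ii) whenever A X and A (Y x) for all x : X then A (Σ x, Y x), then the type Σ (X : Type u), A X (in which equality of elements is determined by equivalence of first components via univalence, or, in Lean, up to providing an equivalence) admits flabbiness structure: for every subsingleton P : Type u and f : P → Σ (X : Type u), A X, there is d : Σ (X : Type u), A X together with, for each p : P, an equivalence d.1 ≃ (f p).1. -/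
universe u

theorem stmt_12 (A : Type u → Prop)
    (hsub : ∀ P : Type u, Subsingleton P → A P)
    (hsigma : ∀ (X : Type u) (Y : X → Type u), A X → (∀ x : X, A (Y x)) →
      A (Σ x : X, Y x))
    (P : Type u) (hP : Subsingleton P) (f : P → {X : Type u // A X}) :
    Nonempty (Σ' d : {X : Type u // A X}, ∀ p : P, d.1 ≃ (f p).1) := by
  refine ⟨⟨⟨Σ p : P, (f p).1, hsigma P _ (hsub P hP) fun p => (f p).2⟩, fun p => ?_⟩⟩
  haveI : Unique P := ⟨⟨p⟩, fun x => Subsingleton.elim _ _⟩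
  exact (Equiv.sigmaCongrRight fun q =>
      Equiv.cast (congrArg (fun r => ((f r).1 : Type u)) (Subsingleton.elim q p))).trans
    ((Equiv.sigmaEquivProd P (f p).1).trans (Equiv.uniqueProd _ _))
end
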